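/- Let r ≥ 1 be an integer, G = (V,E) a finite simple graph, and A ⊆ E. For a set V' ⊆ V define d'(v) = 1 if v ∈ V' and d'(v) = 0 otherwise, and give each edge uv ∈ E∖A the weight w'(uv) = d'(u) + d'(v). Then the following are equivalent: (i) there exists a maximal r-DCPS set S of G with S ∩ A = ∅; (ii) there exists a vertex cover V' of the graph (V, A) and a set S' ⊆ E∖A such that every vertex of V is incident to at most r edges of S' and Σ_{uv∈S'} (d'(u)+d'(v)) ≥ |V'|·r. -/

import Mathlib

/-!
If `S` is a maximal `r`-DCPS set avoiding `A`, take for `V'` the vertices saturated by `S`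
(degree exactly `r`). Maximality forces every edge outside `S`, in particular every edge of `A`,
to have a saturated endpoint, and by double counting the `w'`-weight of `S` is
`∑_{v ∈ V'} deg_S v = |V'| r`.

Conversely, as degrees in `S'` are at most `r`, the bound `∑_{v ∈ V'} deg_{S'} v ≥ |V'| r` says
that every vertex of `V'` is saturated by `S'`. Extend `S'` to an `r`-DCPS set `T ⊆ E ∖ A` that
is maximal among such sets: no edge of `E ∖ A` can be added to `T` by construction, and no edge
of `A` either, because its endpoint in `V'` is already saturated.
-/

/-- `S` is a vertex cover of the graph whose edge set is `A`. -/
def IsVertexCoverOf {V : Type*} (A : Set (Sym2 V)) (S : Set V) : Prop :=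
  ∀ e ∈ A, ∃ v ∈ S, v ∈ e

/-- The weight of an edge `uv` is `d u + d v`. -/
def edgeW {V : Type*} (d : V → ℕ) : Sym2 V → ℕ :=
  Sym2.lift ⟨fun u v => d u + d v, fun u v => Nat.add_comm (d u) (d v)⟩

section

variable {V : Type*}

noncomputable def degreeIn (S : Set (Sym2 V)) (v : V) : ℕ :=
  {e ∈ S | v ∈ e}.ncard

def IsDCPS (r : ℕ) (S : Set (Sym2 V)) : Prop :=
  ∀ v, degreeIn S v ≤ r

def IsMaximalDCPS (r : ℕ) (E S : Set (Sym2 V)) : Prop :=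
  S ⊆ E ∧ IsDCPS r S ∧ ∀ e ∈ E \ S, ¬ IsDCPS r (insert e S)

lemma degreeIn_mono [Finite V] {S T : Set (Sym2 V)} (h : S ⊆ T) (v : V) :
    degreeIn S v ≤ degreeIn T v :=
  Set.ncard_le_ncard (fun _ he => ⟨h he.1, he.2⟩) (Set.toFinite _)

lemma degreeIn_insert_of_mem [Finite V] {S : Set (Sym2 V)} {e : Sym2 V} (he : e ∉ S)
    {v : V} (hv : v ∈ e) : degreeIn (insert e S) v = degreeIn S v + 1 := by
  have : {f ∈ insert e S | v ∈ f} = insert e {f ∈ S | v ∈ f} := by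
    ext f
    constructor
    · rintro ⟨rfl | hf, hvf⟩
      exacts [Or.inl rfl, Or.inr ⟨hf, hvf⟩]
    · rintro (rfl | ⟨hf, hvf⟩)
      exacts [⟨Or.inl rfl, hv⟩, ⟨Or.inr hf, hvf⟩]
  rw [degreeIn, this, Set.ncard_insert_of_notMem (fun h => he h.1) (Set.toFinite _)]
  rfl

lemma degreeIn_insert_of_notMem {S : Set (Sym2 V)} {e : Sym2 V} {v : V} (hv : v ∉ e) :
    degreeIn (insert e S) v = degreeIn S v := by
  unfold degreeIn
  congr 1
  ext f
  constructor
  · rintro ⟨rfl | hf, hvf⟩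
    exacts [absurd hvf hv, ⟨hf, hvf⟩]
  · exact fun ⟨hf, hvf⟩ => ⟨Or.inr hf, hvf⟩

lemma IsDCPS.exists_mem_degreeIn_eq_of_not_insert [Finite V] {r : ℕ} {S : Set (Sym2 V)}
    {e : Sym2 V} (hS : IsDCPS r S) (he : ¬ IsDCPS r (insert e S)) :
    ∃ v ∈ e, degreeIn S v = r := by
  have heS : e ∉ S := fun h => he (by rwa [Set.insert_eq_of_mem h])
  obtain ⟨v, hv⟩ : ∃ v, r < degreeIn (insert e S) v := by simpa [IsDCPS] using he
  by_cases hve : v ∈ e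
  · rw [degreeIn_insert_of_mem heS hve] at hv
    exact ⟨v, hve, le_antisymm (hS v) (by omega)⟩
  · rw [degreeIn_insert_of_notMem hve] at hv
    exact absurd (hS v) hv.not_ge

lemma IsDCPS.exists_maximal_extension [Finite V] {r : ℕ} {S F : Set (Sym2 V)}
    (hS : IsDCPS r S) (hSF : S ⊆ F) :
    ∃ T, S ⊆ T ∧ IsMaximalDCPS r F T := by
  obtain ⟨T, hST, ⟨hTF, hT⟩, hmax⟩ :=
    Finite.exists_le_maximal (p := fun T : Set (Sym2 V) => T ⊆ F ∧ IsDCPS r T) ⟨hSF, hS⟩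
  refine ⟨T, hST, hTF, hT, fun e he heT => he.2 ?_⟩
  exact hmax ⟨Set.insert_subset he.1 hTF, heT⟩ (Set.subset_insert e T) (Set.mem_insert e T)

lemma edgeW_eq_sum_ite [Fintype V] [DecidableEq V] (d : V → ℕ) {e : Sym2 V} (he : ¬ e.IsDiag) :
    edgeW d e = ∑ v, if v ∈ e then d v else 0 := by
  induction e using Sym2.ind with
  | _ u w =>
    have huw : u ≠ w := fun h => he (by simp [h])
    have hmem : ∀ v, (v ∈ s(u, w)) = (v ∈ ({u, w} : Finset V)) := by simp [Sym2.mem_iff]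
    simp only [hmem]
    rw [Finset.sum_ite_mem, Finset.univ_inter, Finset.sum_pair huw]
    rfl

lemma sum_edgeW_eq_sum_mul_degreeIn [Fintype V] (d : V → ℕ) (S : Finset (Sym2 V))
    (hS : ∀ e ∈ S, ¬ e.IsDiag) :
    ∑ e ∈ S, edgeW d e = ∑ v, d v * degreeIn ↑S v := by
  classical
  rw [Finset.sum_congr rfl fun e he => edgeW_eq_sum_ite d (hS e he), Finset.sum_comm]
  refine Finset.sum_congr rfl fun v _ => ?_
  have : {e ∈ (S : Set (Sym2 V)) | v ∈ e} = ↑(S.filter (v ∈ ·)) := by ext; simp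
  rw [degreeIn, this, Set.ncard_coe_finset, ← Finset.sum_filter, Finset.sum_const, smul_eq_mul,
    mul_comm]

lemma sum_edgeW_indicator [Fintype V] [DecidableEq V] (V' : Finset V) (S : Finset (Sym2 V))
    (hS : ∀ e ∈ S, ¬ e.IsDiag) :
    ∑ e ∈ S, edgeW (fun v => if v ∈ V' then 1 else 0) e = ∑ v ∈ V', degreeIn ↑S v := by
  rw [sum_edgeW_eq_sum_mul_degreeIn _ S hS]
  simp only [ite_mul, one_mul, zero_mul]
  rw [Finset.sum_ite_mem, Finset.univ_inter]

lemma IsDCPS.card_mul_le_sum_degreeIn_iff {r : ℕ} {S : Set (Sym2 V)} (hS : IsDCPS r S)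
    (V' : Finset V) :
    V'.card * r ≤ ∑ v ∈ V', degreeIn S v ↔ ∀ v ∈ V', degreeIn S v = r := by
  have hle : ∑ v ∈ V', degreeIn S v ≤ V'.card * r :=
    Finset.sum_le_card_nsmul V' _ r fun v _ => hS v
  have heq := Finset.sum_eq_sum_iff_of_le (s := V') (g := fun _ => r) fun v _ => hS v
  rw [Finset.sum_const, smul_eq_mul] at heq
  rw [← heq]
  omega

theorem IsMaximalDCPS.exists_vertexCover [Fintype V] [DecidableEq V] {r : ℕ}
    {G : SimpleGraph V} {A S : Set (Sym2 V)} (hA : A ⊆ G.edgeSet)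
    (hS : IsMaximalDCPS r G.edgeSet S) (hSA : Disjoint S A) :
    ∃ V' : Finset V, IsVertexCoverOf A ↑V' ∧ ∃ S' : Finset (Sym2 V), ↑S' ⊆ G.edgeSet \ A ∧
      IsDCPS r (S' : Set (Sym2 V)) ∧
      V'.card * r ≤ ∑ e ∈ S', edgeW (fun v => if v ∈ V' then 1 else 0) e := by
  classical
  obtain ⟨hSE, hS, hmax⟩ := hS
  set S' := (Set.toFinite S).toFinset
  have hS' : (S' : Set (Sym2 V)) = S := Set.Finite.coe_toFinset _
  refine ⟨Finset.univ.filter (fun v => degreeIn S v = r), fun e heA => ?_, S', ?_, hS' ▸ hS, ?_⟩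
  · obtain ⟨v, hve, hv⟩ := hS.exists_mem_degreeIn_eq_of_not_insert
      (hmax e ⟨hA heA, Set.disjoint_right.mp hSA heA⟩)
    exact ⟨v, by simpa using hv, hve⟩
  · exact hS' ▸ Set.subset_sdiff.mpr ⟨hSE, hSA⟩
  · rw [sum_edgeW_indicator _ _ fun e he => G.not_isDiag_of_mem_edgeSet (hSE (hS' ▸ he)), hS',
      hS.card_mul_le_sum_degreeIn_iff]
    simp

theorem exists_isMaximalDCPS_of_vertexCover [Fintype V] [DecidableEq V] {r : ℕ}
    {G : SimpleGraph V} {A : Set (Sym2 V)} {V' : Finset V} (hV' : IsVertexCoverOf A ↑V')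
    {S' : Finset (Sym2 V)} (hS'E : ↑S' ⊆ G.edgeSet \ A) (hS' : IsDCPS r (S' : Set (Sym2 V)))
    (hw : V'.card * r ≤ ∑ e ∈ S', edgeW (fun v => if v ∈ V' then 1 else 0) e) :
    ∃ S, IsMaximalDCPS r G.edgeSet S ∧ Disjoint S A := by
  have hsat : ∀ v ∈ V', degreeIn (↑S') v = r := by
    rwa [sum_edgeW_indicator _ _ fun e he => G.not_isDiag_of_mem_edgeSet (hS'E he).1,
      hS'.card_mul_le_sum_degreeIn_iff] at hw
  obtain ⟨T, hS'T, hTE, hT, hmax⟩ := hS'.exists_maximal_extension hS'E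
  refine ⟨T, ⟨fun e he => (hTE he).1, hT, fun e he heT => ?_⟩, (Set.subset_sdiff.mp hTE).2⟩
  by_cases heA : e ∈ A
  · obtain ⟨v, hv, hve⟩ := hV' e heA
    have hdeg := heT v
    rw [degreeIn_insert_of_mem he.2 hve, ← hsat v hv] at hdeg
    exact absurd (degreeIn_mono hS'T v) (by omega)
  · exact hmax e ⟨⟨he.1, heA⟩, he.2⟩ heT

end

theorem stmt_4 {V : Type*} [Fintype V] [DecidableEq V] (r : ℕ)
    (G : SimpleGraph V) (A : Set (Sym2 V)) (hA : A ⊆ G.edgeSet) :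
    (∃ S : Set (Sym2 V), S ⊆ G.edgeSet ∧
        (∀ v : V, ({e ∈ S | v ∈ e}).ncard ≤ r) ∧
        (∀ e ∈ G.edgeSet \ S, ¬ ∀ v : V, ({f ∈ insert e S | v ∈ f}).ncard ≤ r) ∧
        S ∩ A = ∅) ↔
      (∃ V' : Finset V, IsVertexCoverOf A ↑V' ∧
        ∃ S' : Finset (Sym2 V), ↑S' ⊆ G.edgeSet \ A ∧
          (∀ v : V, ({e ∈ (↑S' : Set (Sym2 V)) | v ∈ e}).ncard ≤ r) ∧
          V'.card * r ≤ ∑ e ∈ S', edgeW (fun v => if v ∈ V' then 1 else 0) e) := by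
  constructor
  · rintro ⟨S, hSE, hS, hmax, hSA⟩
    exact IsMaximalDCPS.exists_vertexCover hA ⟨hSE, hS, hmax⟩
      (Set.disjoint_iff_inter_eq_empty.mpr hSA)
  · rintro ⟨V', hV', S', hS'E, hS', hw⟩
    obtain ⟨S, ⟨hSE, hS, hmax⟩, hSA⟩ := exists_isMaximalDCPS_of_vertexCover hV' hS'E hS' hw
    exact ⟨S, hSE, hS, hmax, Set.disjoint_iff_inter_eq_empty.mp hSA⟩
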